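/- Let μ be the measure on ℝ with dμ(x) = e^{x²} dx, and let f(x) = x·χ_{(0,∞)}(x). Then the centered maximal function satisfies M^c f(x) = ∞ for every x ≥ 0. -/

import Mathlib

open MeasureTheory Metric Filter Set ENNReal

/-- The centered Hardy–Littlewood maximal function of `f` at `x`,
with respect to the measure `μ`. -/
noncomputable def centeredMaximal {X : Type*} [MeasurableSpace X] [PseudoMetricSpace X]
    (μ : Measure X) (f : X → ℝ) (x : X) : ℝ≥0∞ :=
  ⨆ (r : ℝ) (_ : 0 < r),
    (∫⁻ y in Metric.ball x r, ENNReal.ofReal |f y| ∂μ) / μ (Metric.ball x r)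

/-- The non-centered Hardy–Littlewood maximal function of `f` at `x`:
the supremum is taken over all open balls containing `x`. -/
noncomputable def noncenteredMaximal {X : Type*} [MeasurableSpace X] [PseudoMetricSpace X]
    (μ : Measure X) (f : X → ℝ) (x : X) : ℝ≥0∞ :=
  ⨆ (c : X) (r : ℝ) (_ : 0 < r) (_ : x ∈ Metric.ball c r),
    (∫⁻ y in Metric.ball c r, ENNReal.ofReal |f y| ∂μ) / μ (Metric.ball c r)

/-- `f ∈ L¹_loc(μ)`: `∫_B |f| dμ < ∞` for every open ball `B`. -/
def LocallyIntegrableBall {X : Type*} [MeasurableSpace X] [PseudoMetricSpace X]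
    (μ : Measure X) (f : X → ℝ) : Prop :=
  ∀ (c : X) (r : ℝ), 0 < r → (∫⁻ y in Metric.ball c r, ENNReal.ofReal |f y| ∂μ) < ⊤

/-! For `x ≥ 0` and `r ≥ x` the ball `(x - r, x + r) =: (a, b)` satisfies `-b ≤ a ≤ 0`, so the
`μ`-integral of `f` over it is `∫₀ᵇ y e^{y²} dy = (e^{b²} - 1)/2`. Its `μ`-measure is at most
`∫_{-b}^b e^{y²} dy`, and bounding `e^{y²} ≤ e^{c²} + |y| e^{y²}/c` shows this is at most
`2b e^{c²} + (e^{b²} - 1)/c`. For `b` large compared with `c` the average of `f` is therefore at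
least `c/4`, and `c` is arbitrary. -/

section

open Real

theorem hasDerivAt_exp_sq_div_two (y : ℝ) :
    HasDerivAt (fun t => exp (t ^ 2) / 2) (y * exp (y ^ 2)) y := by
  refine ((hasDerivAt_pow 2 y).exp.div_const 2).congr_deriv ?_
  push_cast
  ring

theorem integral_mul_exp_sq (a b : ℝ) :
    ∫ y in a..b, y * exp (y ^ 2) = (exp (b ^ 2) - exp (a ^ 2)) / 2 := by
  rw [intervalIntegral.integral_eq_sub_of_hasDerivAt (fun y _ => hasDerivAt_exp_sq_div_two y)
    ((by fun_prop : Continuous fun y : ℝ => y * exp (y ^ 2)).intervalIntegrable _ _)]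
  ring

theorem integral_abs_mul_exp_sq {b : ℝ} (hb : 0 ≤ b) :
    ∫ y in -b..b, |y| * exp (y ^ 2) = exp (b ^ 2) - 1 := by
  have hint : ∀ p q : ℝ, IntervalIntegrable (fun y => |y| * exp (y ^ 2)) volume p q :=
    (by fun_prop : Continuous fun y : ℝ => |y| * exp (y ^ 2)).intervalIntegrable
  have hright : ∫ y in (0 : ℝ)..b, |y| * exp (y ^ 2) = ∫ y in (0 : ℝ)..b, y * exp (y ^ 2) :=
    intervalIntegral.integral_congr fun y hy => by
      rw [uIcc_of_le hb] at hy
      rw [abs_of_nonneg hy.1]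
  have hleft : ∫ y in -b..0, |y| * exp (y ^ 2) = ∫ y in (0 : ℝ)..b, |y| * exp (y ^ 2) := by
    have := intervalIntegral.integral_comp_neg (a := 0) (b := b) fun y => |y| * exp (y ^ 2)
    simp only [neg_zero, abs_neg, neg_sq] at this
    exact this.symm
  rw [← intervalIntegral.integral_add_adjacent_intervals (hint _ 0) (hint 0 _), hleft, hright,
    integral_mul_exp_sq]
  simp

theorem exp_sq_le_add_abs_mul_exp_sq_div {c : ℝ} (hc : 0 < c) (y : ℝ) :
    exp (y ^ 2) ≤ exp (c ^ 2) + |y| * exp (y ^ 2) / c := by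
  rcases le_or_gt |y| c with hy | hy
  · have : exp (y ^ 2) ≤ exp (c ^ 2) :=
      exp_le_exp.2 (by simpa only [sq_abs] using pow_le_pow_left₀ (abs_nonneg y) hy 2)
    have : 0 ≤ |y| * exp (y ^ 2) / c := by positivity
    linarith
  · have : exp (y ^ 2) ≤ |y| * exp (y ^ 2) / c := by
      rw [le_div_iff₀ hc]
      exact mul_le_mul_of_nonneg_left hy.le (exp_pos _).le |>.trans_eq (mul_comm _ _)
    linarith [exp_pos (c ^ 2)]

theorem integral_exp_sq_le {b c : ℝ} (hb : 0 ≤ b) (hc : 0 < c) :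
    ∫ y in -b..b, exp (y ^ 2) ≤ 2 * b * exp (c ^ 2) + (exp (b ^ 2) - 1) / c := by
  have hint : Continuous fun y : ℝ => |y| * exp (y ^ 2) / c := by fun_prop
  calc ∫ y in -b..b, exp (y ^ 2)
      ≤ ∫ y in -b..b, (exp (c ^ 2) + |y| * exp (y ^ 2) / c) :=
        intervalIntegral.integral_mono_on (by linarith)
          ((by fun_prop : Continuous fun y : ℝ => exp (y ^ 2)).intervalIntegrable _ _)
          ((continuous_const.add hint).intervalIntegrable _ _)
          fun y _ => exp_sq_le_add_abs_mul_exp_sq_div hc y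
    _ = 2 * b * exp (c ^ 2) + (exp (b ^ 2) - 1) / c := by
        rw [intervalIntegral.integral_add intervalIntegrable_const (hint.intervalIntegrable _ _),
          intervalIntegral.integral_const, intervalIntegral.integral_div,
          integral_abs_mul_exp_sq hb, smul_eq_mul]
        ring

theorem setLIntegral_Ioo_withDensity_ofReal {w g : ℝ → ℝ} (hw : Continuous w)
    (hg : Continuous g) (hw0 : ∀ y, 0 ≤ w y) {a b : ℝ} (hab : a ≤ b)
    (hg0 : ∀ y ∈ Ioo a b, 0 ≤ g y) :
    ∫⁻ y in Ioo a b, ENNReal.ofReal (g y) ∂volume.withDensity (fun y => ENNReal.ofReal (w y)) =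
      ENNReal.ofReal (∫ y in a..b, g y * w y) := by
  rw [setLIntegral_withDensity_eq_setLIntegral_mul _ hw.measurable.ennreal_ofReal
    hg.measurable.ennreal_ofReal measurableSet_Ioo, intervalIntegral.integral_of_le hab,
    integral_Ioc_eq_integral_Ioo, ofReal_integral_eq_lintegral_ofReal (f := fun y => g y * w y)
      ((hg.mul hw).integrableOn_Icc.mono_set Ioo_subset_Icc_self)
      ((ae_restrict_iff' measurableSet_Ioo).2
        (ae_of_all _ fun y hy => mul_nonneg (hg0 y hy) (hw0 y)))]
  refine setLIntegral_congr_fun measurableSet_Ioo fun y hy => ?_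
  rw [Pi.mul_apply, mul_comm, ENNReal.ofReal_mul (hg0 y hy)]

theorem le_centeredMaximal {X : Type*} [MeasurableSpace X] [PseudoMetricSpace X]
    (μ : Measure X) (f : X → ℝ) (x : X) {r : ℝ} (hr : 0 < r) :
    (∫⁻ y in ball x r, ENNReal.ofReal |f y| ∂μ) / μ (ball x r) ≤ centeredMaximal μ f x :=
  le_iSup₂ (f := fun r (_ : 0 < r) => (∫⁻ y in ball x r, ENNReal.ofReal |f y| ∂μ) / μ (ball x r))
    r hr

theorem ofReal_le_setLIntegral_withDensity_exp_sq {a b : ℝ} (ha : a ≤ 0) (hb : 0 ≤ b) :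
    ENNReal.ofReal ((exp (b ^ 2) - 1) / 2) ≤
      ∫⁻ y in Ioo a b, ENNReal.ofReal |if 0 < y then y else 0|
        ∂volume.withDensity fun y => ENNReal.ofReal (exp (y ^ 2)) :=
  calc ENNReal.ofReal ((exp (b ^ 2) - 1) / 2)
      = ∫⁻ y in Ioo 0 b, ENNReal.ofReal y
          ∂volume.withDensity fun y => ENNReal.ofReal (exp (y ^ 2)) := by
        rw [setLIntegral_Ioo_withDensity_ofReal (by fun_prop) continuous_id'
          (fun _ => (exp_pos _).le) hb fun y hy => hy.1.le, integral_mul_exp_sq]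
        simp
    _ = ∫⁻ y in Ioo 0 b, ENNReal.ofReal |if 0 < y then y else 0|
          ∂volume.withDensity fun y => ENNReal.ofReal (exp (y ^ 2)) :=
        setLIntegral_congr_fun measurableSet_Ioo fun y hy => by
          rw [if_pos hy.1, abs_of_pos hy.1]
    _ ≤ _ := lintegral_mono_set (Ioo_subset_Ioo_left ha)

theorem withDensity_exp_sq_Ioo_le {a b c : ℝ} (ha : -b ≤ a) (hb : 0 ≤ b) (hc : 0 < c) :
    volume.withDensity (fun y => ENNReal.ofReal (exp (y ^ 2))) (Ioo a b) ≤
      ENNReal.ofReal (2 * b * exp (c ^ 2) + (exp (b ^ 2) - 1) / c) :=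
  calc volume.withDensity (fun y => ENNReal.ofReal (exp (y ^ 2))) (Ioo a b)
      ≤ volume.withDensity (fun y => ENNReal.ofReal (exp (y ^ 2))) (Ioo (-b) b) :=
        measure_mono (Ioo_subset_Ioo_left ha)
    _ = ENNReal.ofReal (∫ y in -b..b, exp (y ^ 2)) := by
        rw [← setLIntegral_one, ← ENNReal.ofReal_one, setLIntegral_Ioo_withDensity_ofReal
          (by fun_prop) continuous_const (fun _ => (exp_pos _).le) (by linarith)
          fun _ _ => zero_le_one]
        simp
    _ ≤ _ := ENNReal.ofReal_le_ofReal (integral_exp_sq_le hb hc)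

theorem ofReal_le_centeredMaximal_exp_sq {x A : ℝ} (hx : 0 ≤ x) (hA : 0 < A) :
    ENNReal.ofReal A ≤ centeredMaximal
      (volume.withDensity fun y => ENNReal.ofReal (exp (y ^ 2)))
      (fun y => if 0 < y then y else 0) x := by
  set c := 4 * A
  set b := 2 * x + 2 * c * exp (c ^ 2)
  set D := 2 * b * exp (c ^ 2) + (exp (b ^ 2) - 1) / c
  have hc : 0 < c := by positivity
  have hcb : 2 * c * exp (c ^ 2) ≤ b := le_add_of_nonneg_left (by positivity)
  have hxb : 2 * x < b := lt_add_of_pos_right _ (by positivity)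
  have hball : ball x (b - x) = Ioo (2 * x - b) b := by
    rw [Real.ball_eq_Ioo]
    congr 1 <;> ring
  have hnum := ofReal_le_setLIntegral_withDensity_exp_sq (a := 2 * x - b) (b := b)
    (by linarith) (by linarith)
  have hden := withDensity_exp_sq_Ioo_le (a := 2 * x - b) (b := b) (by linarith) (by linarith) hc
  have hN : 0 < (exp (b ^ 2) - 1) / 2 := by
    have := one_lt_exp_iff.2 (by positivity : 0 < b ^ 2)
    linarith
  -- `b ≥ 2c e^{c²}` gives `e^{b²} - 1 ≥ b² ≥ 2bc e^{c²}`, and `c = 4A`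
  have hAD : A * D ≤ (exp (b ^ 2) - 1) / 2 := by
    have h1 : 2 * c * exp (c ^ 2) * b ≤ b ^ 2 := by nlinarith
    have h2 := add_one_le_exp (b ^ 2)
    have h3 : A * ((exp (b ^ 2) - 1) / c) = (exp (b ^ 2) - 1) / 4 := by
      field_simp
      ring
    nlinarith
  refine le_trans ?_ (le_centeredMaximal _ _ x (by linarith : 0 < b - x))
  rw [hball, ENNReal.le_div_iff_mul_le (Or.inr ((ENNReal.ofReal_pos.2 hN).trans_le hnum).ne')
    (Or.inl (hden.trans_lt ENNReal.ofReal_lt_top).ne)]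
  calc _ ≤ ENNReal.ofReal A * ENNReal.ofReal D := by gcongr
    _ = ENNReal.ofReal (A * D) := (ENNReal.ofReal_mul hA.le).symm
    _ ≤ _ := (ENNReal.ofReal_le_ofReal hAD).trans hnum

end

/-- For `dμ = e^{x²} dx` on `ℝ` and `f(x) = x·χ_{(0,∞)}(x)`, the centered
maximal function `M^c f` is infinite at every `x ≥ 0`. -/
theorem centeredMaximal_eq_top_of_nonneg (μ : Measure ℝ)
    (hμ : μ = volume.withDensity (fun x => ENNReal.ofReal (Real.exp (x ^ 2))))
    (f : ℝ → ℝ) (hf : f = fun x => if 0 < x then x else 0) :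
    ∀ x : ℝ, 0 ≤ x → centeredMaximal μ f x = ⊤ := by
  subst hμ hf
  intro x hx
  refine ENNReal.eq_top_of_forall_nnreal_le fun q => ?_
  calc (q : ℝ≥0∞) = ENNReal.ofReal q := ENNReal.ofReal_coe_nnreal.symm
    _ ≤ ENNReal.ofReal (q + 1) := ENNReal.ofReal_le_ofReal (by linarith)
    _ ≤ _ := ofReal_le_centeredMaximal_exp_sq hx (by positivity)
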